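/- Let Ψ be an instance of {1,2}-CSP whose constraint graph G is connected and bipartite, assume P_∞ ⊨ Ψ, and let f be the ≺-least variable. Then P_2 ⊨ Ψ if and only if every variable v with β(v) = 2 equals f (i.e. G contains no ∃^{≥2} vertex except possibly f). -/
import Mathlib


namespace CountingCSP

/-! ## The basic framework

An instance `Ψ` of `{1,2}`-CSP is modelled by a number `m` of variables, the variable set
being `Fin m` with its natural linear order `<` (the order of quantification `≺`), a function
`β : Fin m → ℕ` taking values in `{1,2}` (variable `v` is quantified by `∃^{≥ β v}`), and a
simple graph `G` on `Fin m` (the constraint graph).  A target graph is a type `B` together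
with an adjacency relation `E : B → B → Prop` (loops allowed in general). -/

/-- Adjacency of the finite path `P_n` on the vertices `{1,…,n}`, modelled as `Fin n`. -/
def pathAdj (n : ℕ) (i j : Fin n) : Prop :=
  (i : ℕ) + 1 = j ∨ (j : ℕ) + 1 = i

/-- Adjacency of the infinite path `P_∞` on `ℤ`: `i` and `j` adjacent iff `|i - j| = 1`. -/
def intPathAdj (i j : ℤ) : Prop := |i - j| = 1

/-- `SatFrom β G E i f` : processing the variables of the instance in `≺`-increasing order
starting from variable `i`, where the earlier variables have been assigned according to `f`,
the instance can be satisfied.  At each variable `v` one asks for a set `S` of `β v` distinct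
elements of the target such that for every `b ∈ S` the rest of the instance can be satisfied
with `v ↦ b`; when all variables are assigned, the assignment must be a homomorphism. -/
def SatFrom {m : ℕ} {B : Type*} (β : Fin m → ℕ) (G : SimpleGraph (Fin m))
    (E : B → B → Prop) (i : ℕ) (f : Fin m → B) : Prop :=
  if h : i < m then
    ∃ S : Finset B, S.card = β ⟨i, h⟩ ∧
      ∀ b ∈ S, SatFrom β G E (i + 1) (Function.update f ⟨i, h⟩ b)
  else ∀ u v : Fin m, G.Adj u v → E (f u) (f v)
termination_by m - i
decreasing_by omega

/-- `Sat β G E` : the instance with quantifiers `β` and constraint graph `G` is satisfied by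
the target graph with adjacency `E`  (i.e. `H ⊨ Ψ`).  The initial assignment is irrelevant
since every variable is assigned before it is used. -/
def Sat {m : ℕ} {B : Type*} (β : Fin m → ℕ) (G : SimpleGraph (Fin m))
    (E : B → B → Prop) : Prop :=
  ∀ f : Fin m → B, SatFrom β G E 0 f

/-- A graph is bipartite iff it has a proper 2-colouring. -/
def Bipartite {V : Type*} (G : SimpleGraph V) : Prop :=
  ∃ c : V → Bool, ∀ u v, G.Adj u v → c u ≠ c v

/-! ## Walks, looping walks, and the distance function δ -/

/-- `λ(Q) = |Q| − 2·∑_{interior vertices x of Q} (β x − 1)`, where `|Q|` is the length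
(number of edges) of the walk `Q = x₁,…,x_r`, and the interior vertices are `x₂,…,x_{r−1}`. -/
def lamWalk {m : ℕ} (β : Fin m → ℕ) (Q : List (Fin m)) : ℤ :=
  ((Q.length : ℤ) - 1) - 2 * (((Q.drop 1).dropLast).map (fun x => (β x : ℤ) - 1)).sum

/-- Looping walks of `G` (with respect to the quantification order `<` on `Fin m`):
a walk `x₁,…,x_r` with `x₁ ≠ x_r` such that if `r ≥ 3` then both endpoints strictly precede
every interior vertex and the walk splits at some interior position into two looping walks. -/
inductive IsLoopingWalk {m : ℕ} (G : SimpleGraph (Fin m)) : List (Fin m) → Prop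
  | base {x y : Fin m} : G.Adj x y → IsLoopingWalk G [x, y]
  | comb {x y z : Fin m} {Q₁ Q₂ : List (Fin m)} :
      IsLoopingWalk G (x :: (Q₁ ++ [y])) →
      IsLoopingWalk G (y :: (Q₂ ++ [z])) →
      x ≠ z →
      (∀ w ∈ Q₁ ++ y :: Q₂, x < w ∧ z < w) →
      IsLoopingWalk G (x :: (Q₁ ++ y :: Q₂ ++ [z]))

/-- `Q` is a looping walk between `u` and `v` (in either direction). -/
def LoopingWalkBetween {m : ℕ} (G : SimpleGraph (Fin m)) (u v : Fin m)
    (Q : List (Fin m)) : Prop :=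
  IsLoopingWalk G Q ∧
    ((Q.head? = some u ∧ Q.getLast? = some v) ∨ (Q.head? = some v ∧ Q.getLast? = some u))

/-- `IsDelta G β u v d` : `d = δ(u,v)`, i.e. `d` is the minimum of `λ(Q)` over all looping
walks `Q` of `G` between `u` and `v`.  (`δ(u,v) < ∞` corresponds to `∃ d, IsDelta G β u v d`.) -/
def IsDelta {m : ℕ} (G : SimpleGraph (Fin m)) (β : Fin m → ℕ) (u v : Fin m) (d : ℤ) : Prop :=
  (∃ Q, LoopingWalkBetween G u v Q ∧ lamWalk β Q = d) ∧
    ∀ Q, LoopingWalkBetween G u v Q → d ≤ lamWalk β Q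

/-! ## The functions γ and γ′ -/

/-- `IsGammaVal G β g v t` : `t = max(0, max_{u ≺ v, δ(u,v) < ∞} (g u − δ(u,v) + β v − 1))`. -/
def IsGammaVal {m : ℕ} (G : SimpleGraph (Fin m)) (β : Fin m → ℕ) (g : Fin m → ℤ)
    (v : Fin m) (t : ℤ) : Prop :=
  0 ≤ t ∧
  (∀ u, u < v → ∀ d, IsDelta G β u v d → g u - d + (β v : ℤ) - 1 ≤ t) ∧
  (t = 0 ∨ ∃ u, u < v ∧ ∃ d, IsDelta G β u v d ∧ t = g u - d + (β v : ℤ) - 1)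

/-- `g` is the function `γ`: `γ(v) = 0` for the `≺`-least vertex, and otherwise
`γ(v) = β(v) − 1 + max(0, max_{u ≺ v, δ(u,v) < ∞} (γ(u) − δ(u,v) + β(v) − 1))`. -/
def IsGamma {m : ℕ} (G : SimpleGraph (Fin m)) (β : Fin m → ℕ) (g : Fin m → ℤ) : Prop :=
  ∀ v : Fin m,
    if (v : ℕ) = 0 then g v = 0
    else ∃ t, IsGammaVal G β g v t ∧ g v = (β v : ℤ) - 1 + t

/-- `g` is the function `γ′`:
`γ′(v) = β(v) − 1 + max(0, max_{u ≺ v, δ(u,v) < ∞} (γ′(u) − δ(u,v) + β(v) − 1))`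
(so `γ′(v) = β(v) − 1` for the `≺`-least vertex). -/
def IsGamma' {m : ℕ} (G : SimpleGraph (Fin m)) (β : Fin m → ℕ) (g : Fin m → ℤ) : Prop :=
  ∀ v : Fin m, ∃ t, IsGammaVal G β g v t ∧ g v = (β v : ℤ) - 1 + t

/-! ## The closure sets (F, R⁺, R⁻) for the {2}-CSP(K₄) algorithm -/

mutual
/-- Membership in the closure set `F` of pairs (initialised as the edge set of `G`). -/
inductive InF {m : ℕ} (G : SimpleGraph (Fin m)) : Finset (Fin m) → Prop
  | edge {x y : Fin m} : G.Adj x y → InF G {x, y}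
  | x3a {x y w z : Fin m} : [x, y, w, z].Pairwise (· ≠ ·) →
      x < z → y < z → w < z → ¬(x < w ∧ y < w) →
      InF G {w, z} → InRp G {x, y, z} → InF G {x, w}
  | x3b {x y w z : Fin m} : [x, y, w, z].Pairwise (· ≠ ·) →
      x < z → y < z → w < z → ¬(x < w ∧ y < w) →
      InF G {w, z} → InRp G {x, y, z} → InF G {y, w}
  | x4 {x y w z : Fin m} : [x, y, w, z].Pairwise (· ≠ ·) →
      x < y → w < y → y < z →
      InRp G {x, y, z} → InRm G {w, y, z} → InF G {x, w}
  | x7a {x y q w z : Fin m} : [x, y, q, w, z].Pairwise (· ≠ ·) →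
      x < q → y < q → w < q → q < z → ¬(x < w ∧ y < w) →
      InRp G {x, y, z} → InRm G {w, q, z} → InF G {x, w}
  | x7a' {x y q w z : Fin m} : [x, y, q, w, z].Pairwise (· ≠ ·) →
      x < q → y < q → w < q → q < z → ¬(x < w ∧ y < w) →
      InRm G {x, y, z} → InRp G {w, q, z} → InF G {x, w}
  | x7b {x y q w z : Fin m} : [x, y, q, w, z].Pairwise (· ≠ ·) →
      x < q → y < q → w < q → q < z → ¬(x < w ∧ y < w) →
      InRp G {x, y, z} → InRm G {w, q, z} → InF G {y, w}
  | x7b' {x y q w z : Fin m} : [x, y, q, w, z].Pairwise (· ≠ ·) →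
      x < q → y < q → w < q → q < z → ¬(x < w ∧ y < w) →
      InRm G {x, y, z} → InRp G {w, q, z} → InF G {y, w}

/-- Membership in the closure set `R⁺` of triples. -/
inductive InRp {m : ℕ} (G : SimpleGraph (Fin m)) : Finset (Fin m) → Prop
  | x2 {x y w z : Fin m} : [x, y, w, z].Pairwise (· ≠ ·) →
      x < z → y < z → w < z →
      InF G {w, z} → InRm G {x, y, z} → InRp G {x, y, w}
  | x4 {x y w z : Fin m} : [x, y, w, z].Pairwise (· ≠ ·) →
      x < y → w < y → y < z →
      InRp G {x, y, z} → InRm G {w, y, z} → InRp G {x, y, w}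
  | x5p {x y w z : Fin m} : [x, y, w, z].Pairwise (· ≠ ·) →
      x < z → y < z → w < z →
      InRp G {x, y, z} → InRp G {w, y, z} → InRp G {x, y, w}
  | x5m {x y w z : Fin m} : [x, y, w, z].Pairwise (· ≠ ·) →
      x < z → y < z → w < z →
      InRm G {x, y, z} → InRm G {w, y, z} → InRp G {x, y, w}
  | x6ap {x y q w z : Fin m} : [x, y, q, w, z].Pairwise (· ≠ ·) →
      x < q → y < q → w < q → q < z →
      InRp G {x, y, z} → InRp G {w, q, z} → InRp G {x, y, w}
  | x6am {x y q w z : Fin m} : [x, y, q, w, z].Pairwise (· ≠ ·) →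
      x < q → y < q → w < q → q < z →
      InRm G {x, y, z} → InRm G {w, q, z} → InRp G {x, y, w}
  | x6bp {x y q w z : Fin m} : [x, y, q, w, z].Pairwise (· ≠ ·) →
      x < q → y < q → w < q → q < z →
      InRp G {x, y, z} → InRp G {w, q, z} → InRp G {x, y, q}
  | x6bm {x y q w z : Fin m} : [x, y, q, w, z].Pairwise (· ≠ ·) →
      x < q → y < q → w < q → q < z →
      InRm G {x, y, z} → InRm G {w, q, z} → InRp G {x, y, q}

/-- Membership in the closure set `R⁻` of triples. -/
inductive InRm {m : ℕ} (G : SimpleGraph (Fin m)) : Finset (Fin m) → Prop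
  | x1 {x y z : Fin m} : [x, y, z].Pairwise (· ≠ ·) →
      x < z → y < z →
      InF G {x, z} → InF G {y, z} → InRm G {x, y, z}
  | x3 {x y w z : Fin m} : [x, y, w, z].Pairwise (· ≠ ·) →
      x < z → y < z → w < z → x < w → y < w →
      InF G {w, z} → InRp G {x, y, z} → InRm G {x, y, w}
  | x7a {x y q w z : Fin m} : [x, y, q, w, z].Pairwise (· ≠ ·) →
      x < q → y < q → w < q → q < z →
      InRp G {x, y, z} → InRm G {w, q, z} → InRm G {x, y, q}
  | x7a' {x y q w z : Fin m} : [x, y, q, w, z].Pairwise (· ≠ ·) →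
      x < q → y < q → w < q → q < z →
      InRm G {x, y, z} → InRp G {w, q, z} → InRm G {x, y, q}
  | x7b {x y q w z : Fin m} : [x, y, q, w, z].Pairwise (· ≠ ·) →
      x < q → y < q → w < q → q < z → x < w → y < w →
      InRp G {x, y, z} → InRm G {w, q, z} → InRm G {x, y, w}
  | x7b' {x y q w z : Fin m} : [x, y, q, w, z].Pairwise (· ≠ ·) →
      x < q → y < q → w < q → q < z → x < w → y < w →
      InRm G {x, y, z} → InRp G {w, q, z} → InRm G {x, y, w}
end


lemma pathAdj2_iff (a b : Fin 2) : pathAdj 2 a b ↔ a ≠ b := by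
  revert a b; unfold pathAdj; decide

/-- Two homomorphisms to `P₂` from a connected graph agreeing at one vertex agree everywhere. -/
lemma hom_eq {m : ℕ} (G : SimpleGraph (Fin m)) (hconn : G.Connected)
    (h₁ h₂ : Fin m → Fin 2)
    (H₁ : ∀ u v, G.Adj u v → pathAdj 2 (h₁ u) (h₁ v))
    (H₂ : ∀ u v, G.Adj u v → pathAdj 2 (h₂ u) (h₂ v))
    (u : Fin m) (hu : h₁ u = h₂ u) (v : Fin m) : h₁ v = h₂ v := by
  have fin2 : ∀ x y z w : Fin 2, x ≠ y → z ≠ w → x = z → y = w := by decide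
  suffices H : ∀ (a b : Fin m) (_ : G.Walk a b), h₁ a = h₂ a → h₁ b = h₂ b by
    obtain ⟨w⟩ := hconn u v; exact H u v w hu
  intro a b w
  induction w with
  | nil => exact id
  | cons hab p ih =>
    intro ha
    exact ih (fin2 _ _ _ _ ((pathAdj2_iff _ _).mp (H₁ _ _ hab))
      ((pathAdj2_iff _ _).mp (H₂ _ _ hab)) ha)

/-- From `SatFrom` one can extract a full homomorphism agreeing with the partial assignment. -/
lemma exists_hom_of_satFrom {m : ℕ} (β : Fin m → ℕ) (hβ1 : ∀ v, 1 ≤ β v)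
    (G : SimpleGraph (Fin m)) (i : ℕ) (f₀ : Fin m → Fin 2)
    (hs : SatFrom β G (pathAdj 2) i f₀) :
    ∃ g : Fin m → Fin 2, (∀ j : Fin m, (j : ℕ) < i → g j = f₀ j) ∧
      ∀ u v, G.Adj u v → pathAdj 2 (g u) (g v) := by
  by_cases h : i < m
  · rw [SatFrom, dif_pos h] at hs
    obtain ⟨S, hcard, hS⟩ := hs
    obtain ⟨b, hb⟩ := Finset.card_pos.mp (by rw [hcard]; exact hβ1 _)
    obtain ⟨g, hg1, hg2⟩ := exists_hom_of_satFrom β hβ1 G (i + 1) _ (hS b hb)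
    refine ⟨g, fun j hj => ?_, hg2⟩
    rw [hg1 j (by omega), Function.update_of_ne (by intro hje; rw [hje] at hj; simp at hj)]
  · rw [SatFrom, dif_neg h] at hs
    exact ⟨f₀, fun j _ => rfl, hs⟩
termination_by m - i

/-- From `SatFrom` at step `i ≤ v` with `β v = 2`, one can extract two full homomorphisms
that differ at `v` but agree with the partial assignment below `i`. -/
lemma two_homs {m : ℕ} (β : Fin m → ℕ) (hβ1 : ∀ v, 1 ≤ β v)
    (G : SimpleGraph (Fin m)) (v : Fin m) (hv2 : β v = 2)
    (i : ℕ) (f₀ : Fin m → Fin 2) (hiv : i ≤ (v : ℕ))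
    (hs : SatFrom β G (pathAdj 2) i f₀) :
    ∃ g₁ g₂ : Fin m → Fin 2,
      (∀ u w, G.Adj u w → pathAdj 2 (g₁ u) (g₁ w)) ∧
      (∀ u w, G.Adj u w → pathAdj 2 (g₂ u) (g₂ w)) ∧
      g₁ v ≠ g₂ v ∧ ∀ j : Fin m, (j : ℕ) < i → g₁ j = f₀ j ∧ g₂ j = f₀ j := by
  have h : i < m := lt_of_le_of_lt hiv v.isLt
  rw [SatFrom, dif_pos h] at hs
  obtain ⟨S, hcard, hS⟩ := hs
  rcases eq_or_lt_of_le hiv with heq | hlt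
  · -- base case : i = v
    have hveq : (⟨i, h⟩ : Fin m) = v := Fin.ext heq
    obtain ⟨b₁, hb₁, b₂, hb₂, hne⟩ := Finset.one_lt_card.mp
      (by rw [hcard, hveq, hv2]; norm_num)
    obtain ⟨g₁, hg₁a, hg₁h⟩ := exists_hom_of_satFrom β hβ1 G (i + 1) _ (hS b₁ hb₁)
    obtain ⟨g₂, hg₂a, hg₂h⟩ := exists_hom_of_satFrom β hβ1 G (i + 1) _ (hS b₂ hb₂)
    refine ⟨g₁, g₂, hg₁h, hg₂h, ?_, fun j hj => ?_⟩
    · have e₁ : g₁ v = b₁ := by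
        rw [hg₁a v (by omega), ← hveq, Function.update_self]
      have e₂ : g₂ v = b₂ := by
        rw [hg₂a v (by omega), ← hveq, Function.update_self]
      rw [e₁, e₂]; exact hne
    · have hjne : j ≠ (⟨i, h⟩ : Fin m) := by
        intro hje; rw [hje] at hj; simp at hj
      constructor
      · rw [hg₁a j (by omega), Function.update_of_ne hjne]
      · rw [hg₂a j (by omega), Function.update_of_ne hjne]
  · -- step case : i < v
    obtain ⟨b, hb⟩ := Finset.card_pos.mp (by rw [hcard]; exact hβ1 _)
    obtain ⟨g₁, g₂, hg₁h, hg₂h, hne, hag⟩ :=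
      two_homs β hβ1 G v hv2 (i + 1) _ hlt (hS b hb)
    refine ⟨g₁, g₂, hg₁h, hg₂h, hne, fun j hj => ?_⟩
    have hjne : j ≠ (⟨i, h⟩ : Fin m) := by
      intro hje; rw [hje] at hj; simp at hj
    obtain ⟨e₁, e₂⟩ := hag j (by omega)
    rw [Function.update_of_ne hjne] at e₁ e₂
    exact ⟨e₁, e₂⟩
termination_by (v : ℕ) - i

/-- If from step `i` on every variable has `β = 1` and the partial assignment agrees with a
homomorphism `g` below `i`, then `SatFrom` holds at step `i`. -/
lemma satFrom_of_hom {m : ℕ} (β : Fin m → ℕ) (G : SimpleGraph (Fin m))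
    (g : Fin m → Fin 2) (hg : ∀ u v, G.Adj u v → pathAdj 2 (g u) (g v))
    (i : ℕ) (hβ1 : ∀ j : Fin m, i ≤ (j : ℕ) → β j = 1)
    (f₀ : Fin m → Fin 2) (hf₀ : ∀ j : Fin m, (j : ℕ) < i → f₀ j = g j) :
    SatFrom β G (pathAdj 2) i f₀ := by
  by_cases h : i < m
  · rw [SatFrom, dif_pos h]
    refine ⟨{g ⟨i, h⟩}, by rw [Finset.card_singleton, hβ1 ⟨i, h⟩ (le_refl _)], ?_⟩
    intro b hb
    rw [Finset.mem_singleton] at hb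
    subst hb
    refine satFrom_of_hom β G g hg (i + 1) (fun j hj => hβ1 j (by omega)) _ (fun j hj => ?_)
    rcases eq_or_ne j (⟨i, h⟩ : Fin m) with rfl | hjne
    · rw [Function.update_self]
    · rw [Function.update_of_ne hjne]
      exact hf₀ j (by
        have : (j : ℕ) ≠ i := fun he => hjne (Fin.ext he)
        omega)
  · rw [SatFrom, dif_neg h]
    intro u v huv
    rw [hf₀ u (by omega), hf₀ v (by omega)]
    exact hg u v huv
termination_by m - i

/-- Let `Ψ` have connected bipartite constraint graph `G`, `P_∞ ⊨ Ψ`, and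
let `f` be the `≺`-least variable.  Then `P_2 ⊨ Ψ` iff every `∃^{≥2}` variable equals `f`. -/
theorem p2_sat_iff {m : ℕ} (β : Fin m → ℕ) (hβ : ∀ v, β v = 1 ∨ β v = 2)
    (G : SimpleGraph (Fin m)) (hconn : G.Connected) (hbip : Bipartite G)
    (hinf : Sat β G intPathAdj) (f : Fin m) (hf : ∀ v, f ≤ v) :
    Sat β G (pathAdj 2) ↔ ∀ v : Fin m, β v = 2 → v = f := by
  have hm : 0 < m := f.pos
  have hβ1 : ∀ v, 1 ≤ β v := fun v => by rcases hβ v with h | h <;> omega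
  have hf0 : (f : ℕ) = 0 := Nat.le_antisymm (hf ⟨0, hm⟩) (Nat.zero_le _)
  constructor
  · -- forward direction
    intro hsat v hv2
    by_contra hne
    have hvpos : 0 < (v : ℕ) := by
      rcases Nat.eq_zero_or_pos (v : ℕ) with h0 | h0
      · exact absurd (Fin.ext (h0.trans hf0.symm) : v = f) hne
      · exact h0
    have hs := hsat (fun _ => 0)
    rw [SatFrom, dif_pos hm] at hs
    obtain ⟨S, hcard, hS⟩ := hs
    obtain ⟨b, hb⟩ := Finset.card_pos.mp (by rw [hcard]; exact hβ1 _)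
    obtain ⟨g₁, g₂, H₁, H₂, hnev, hag⟩ :=
      two_homs β hβ1 G v hv2 1 _ hvpos (hS b hb)
    have hfa : g₁ f = g₂ f := by
      obtain ⟨e₁, e₂⟩ := hag f (by omega)
      rw [e₁, e₂]
    exact hnev (hom_eq G hconn g₁ g₂ H₁ H₂ f hfa v)
  · -- backward direction
    intro hall f₀
    obtain ⟨c, hc⟩ := hbip
    set g : Bool → Fin m → Fin 2 := fun s v => if c v = s then 0 else 1 with hgdef
    have hghom : ∀ s, ∀ u v, G.Adj u v → pathAdj 2 (g s u) (g s v) := by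
      intro s u v huv
      rw [pathAdj2_iff]
      have := hc u v huv
      simp only [hgdef]
      rcases Bool.eq_false_or_eq_true (c u) with h1 | h1 <;>
        rcases Bool.eq_false_or_eq_true (c v) with h2 | h2 <;>
        simp_all <;> rcases Bool.eq_false_or_eq_true s with h3 | h3 <;> simp_all
    have hβlater : ∀ j : Fin m, 1 ≤ (j : ℕ) → β j = 1 := by
      intro j hj
      rcases hβ j with h | h
      · exact h
      · have := hall j h
        subst this
        omega
    have v0 : Fin m := ⟨0, hm⟩
    rw [SatFrom, dif_pos hm]
    have key : ∀ b : Fin 2, (∃ s, g s ⟨0, hm⟩ = b) := by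
      intro b
      fin_cases b
      · exact ⟨c ⟨0, hm⟩, by simp [hgdef]⟩
      · exact ⟨!c ⟨0, hm⟩, by simp [hgdef]⟩
    have step : ∀ b : Fin 2, SatFrom β G (pathAdj 2) 1 (Function.update f₀ ⟨0, hm⟩ b) := by
      intro b
      obtain ⟨s, hsb⟩ := key b
      refine satFrom_of_hom β G (g s) (hghom s) 1 hβlater _ (fun j hj => ?_)
      have : j = (⟨0, hm⟩ : Fin m) := Fin.ext (show (j : ℕ) = 0 by omega)
      subst this
      rw [Function.update_self, ← hsb]
    rcases hβ ⟨0, hm⟩ with h1 | h2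
    · exact ⟨{0}, by rw [Finset.card_singleton, h1], fun b hb => step b⟩
    · refine ⟨Finset.univ, ?_, fun b hb => step b⟩
      rw [Finset.card_univ, Fintype.card_fin, h2]

end CountingCSP
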